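/- arXiv:2411.13344 — 5 statements merged into one kernel-verified Lean document; each statement's English description precedes it below -/
import Mathlib

section
/- Let Σ, Σ_r ∈ ℂ^{p×m}, Ê22 ∈ ℂ^{m×p}, and invertible G_u ∈ ℂ^{m×m}, G_y ∈ ℂ^{p×p}, and assume I − Ê22·Σ and I − Ê22·Σ_r are invertible. Define the augmented-channel reduction error Ẽ_{F,22} = G_y·Σ_r·(I − Ê22·Σ_r)⁻¹·G_u − G_y·Σ·(I − Ê22·Σ)⁻¹·G_u, and set T = Σ·(I − Ê22·Σ)⁻¹ + G_y⁻¹·Ẽ_{F,22}·G_u⁻¹. Then I + Ê22·T is invertible and Σ_r = T·(I + Ê22·T)⁻¹; equivalently, Σ_r = F_u([[−Ê22, I],[I, 0]], Σ·(I − Ê22·Σ)⁻¹ + G_y⁻¹·Ẽ_{F,22}·G_u⁻¹). -/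
open Matrix

/-- The upper linear fractional transformation `F_u(P, M)` of a 2×2-block matrix
`P = [[P11, P12],[P21, P22]]` with `M`: `F_u(P, M) = P22 + P21·M·(I − P11·M)⁻¹·P12`. -/
noncomputable def upperLFT {α β γ δ : Type*} [Fintype α] [Fintype β] [DecidableEq α]
    (P11 : Matrix α β ℂ) (P12 : Matrix α δ ℂ)
    (P21 : Matrix γ β ℂ) (P22 : Matrix γ δ ℂ)
    (M : Matrix β α ℂ) : Matrix γ δ ℂ :=
  P22 + P21 * M * (1 - P11 * M)⁻¹ * P12

/-- Error-correspondence lemma (pointwise in frequency): with the augmented-channel reduction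
error `Ẽ_{F,22} = G_y·Σ_r·(I − Ê22·Σ_r)⁻¹·G_u − G_y·Σ·(I − Ê22·Σ)⁻¹·G_u` and
`T = Σ·(I − Ê22·Σ)⁻¹ + G_y⁻¹·Ẽ_{F,22}·G_u⁻¹`, the matrix `I + Ê22·T` is invertible and
`Σ_r = T·(I + Ê22·T)⁻¹`; equivalently `Σ_r = F_u([[−Ê22, I],[I, 0]], T)`. -/
theorem reduced_system_from_error
    (m p : ℕ) (S Sr : Matrix (Fin p) (Fin m) ℂ) (Eh22 : Matrix (Fin m) (Fin p) ℂ)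
    (Gu : Matrix (Fin m) (Fin m) ℂ) (Gy : Matrix (Fin p) (Fin p) ℂ)
    (hGu : IsUnit Gu) (hGy : IsUnit Gy)
    (hS : IsUnit (1 - Eh22 * S)) (hSr : IsUnit (1 - Eh22 * Sr))
    (EF22 : Matrix (Fin p) (Fin m) ℂ)
    (hEF22 : EF22 = Gy * Sr * (1 - Eh22 * Sr)⁻¹ * Gu - Gy * S * (1 - Eh22 * S)⁻¹ * Gu)
    (T : Matrix (Fin p) (Fin m) ℂ)
    (hT : T = S * (1 - Eh22 * S)⁻¹ + Gy⁻¹ * EF22 * Gu⁻¹) :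
    IsUnit (1 + Eh22 * T) ∧ Sr = T * (1 + Eh22 * T)⁻¹ ∧
      Sr = upperLFT (-Eh22) (1 : Matrix (Fin m) (Fin m) ℂ) (1 : Matrix (Fin p) (Fin p) ℂ)
        (0 : Matrix (Fin p) (Fin m) ℂ) T := by
  have hGy1 : Gy⁻¹ * Gy = 1 := Matrix.nonsing_inv_mul _ ((Matrix.isUnit_iff_isUnit_det _).mp hGy)
  have hGu1 : Gu * Gu⁻¹ = 1 := Matrix.mul_nonsing_inv _ ((Matrix.isUnit_iff_isUnit_det _).mp hGu)
  set A := 1 - Eh22 * Sr with hA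
  have hdA : IsUnit A.det := (Matrix.isUnit_iff_isUnit_det _).mp hSr
  have hAA : A * A⁻¹ = 1 := Matrix.mul_nonsing_inv _ hdA
  have hAA' : A⁻¹ * A = 1 := Matrix.nonsing_inv_mul _ hdA
  have hT' : T = Sr * A⁻¹ := by
    rw [hT, hEF22, Matrix.mul_sub, Matrix.sub_mul]
    have c1 : Gy⁻¹ * (Gy * Sr * A⁻¹ * Gu) * Gu⁻¹ = Sr * A⁻¹ := by
      simp [Matrix.mul_assoc, hGu1]
      rw [← Matrix.mul_assoc, hGy1, Matrix.one_mul]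
    have c2 : Gy⁻¹ * (Gy * S * (1 - Eh22 * S)⁻¹ * Gu) * Gu⁻¹ = S * (1 - Eh22 * S)⁻¹ := by
      simp [Matrix.mul_assoc, hGu1]
      rw [← Matrix.mul_assoc, hGy1, Matrix.one_mul]
    rw [c1, c2]; abel
  have hE : 1 + Eh22 * T = A⁻¹ := by
    have : Eh22 * Sr = 1 - A := by rw [hA]; abel
    rw [hT', ← Matrix.mul_assoc, this, Matrix.sub_mul, Matrix.one_mul, hAA]
    abel
  have hU : IsUnit (1 + Eh22 * T) := by
    rw [hE]; exact Matrix.isUnit_nonsing_inv_iff.mpr hSr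
  have hinv : (1 + Eh22 * T)⁻¹ = A := by rw [hE, Matrix.nonsing_inv_nonsing_inv _ hdA]
  have hmain : Sr = T * (1 + Eh22 * T)⁻¹ := by
    rw [hinv, hT', Matrix.mul_assoc, hAA', Matrix.mul_one]
  refine ⟨hU, hmain, ?_⟩
  rw [upperLFT]
  simp only [Matrix.neg_mul, sub_neg_eq_add, Matrix.one_mul, Matrix.mul_one, zero_add]
  exact hmain
end

section
/- Let K, Δ ∈ ℂ^{m×p} and Σ ∈ ℂ^{p×m} such that I − K·Σ and I − (K + Δ)·Σ are invertible, and set M = Σ·(I − K·Σ)⁻¹. Then I − M·Δ is invertible and Σ·(I − (K + Δ)·Σ)⁻¹ = M + M·Δ·(I − M·Δ)⁻¹·M; equivalently, Σ·(I − (K + Δ)·Σ)⁻¹ = F_u([[M, M],[M, M]], Δ). -/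
open Matrix

/-- Perturbation identity for the closed-loop transfer: if `I − K·Σ` and `I − (K + Δ)·Σ` are
invertible and `M = Σ·(I − K·Σ)⁻¹`, then `I − M·Δ` is invertible and
`Σ·(I − (K + Δ)·Σ)⁻¹ = M + M·Δ·(I − M·Δ)⁻¹·M = F_u([[M, M],[M, M]], Δ)`. -/
theorem closedLoop_perturbation
    (m p : ℕ) (K Δ : Matrix (Fin m) (Fin p) ℂ) (S : Matrix (Fin p) (Fin m) ℂ)
    (hK : IsUnit (1 - K * S)) (hKΔ : IsUnit (1 - (K + Δ) * S))
    (M : Matrix (Fin p) (Fin m) ℂ) (hM : M = S * (1 - K * S)⁻¹) :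
    IsUnit (1 - M * Δ) ∧
      S * (1 - (K + Δ) * S)⁻¹ = M + M * Δ * (1 - M * Δ)⁻¹ * M ∧
      S * (1 - (K + Δ) * S)⁻¹ = upperLFT M M M M Δ := by
  subst hM
  set A : Matrix (Fin m) (Fin m) ℂ := 1 - K * S with hA
  set B : Matrix (Fin m) (Fin m) ℂ := 1 - (K + Δ) * S with hB
  have hAdet : IsUnit A.det := (Matrix.isUnit_iff_isUnit_det A).mp hK
  have hBdet : IsUnit B.det := (Matrix.isUnit_iff_isUnit_det B).mp hKΔ
  have hAAi : A * A⁻¹ = 1 := Matrix.mul_nonsing_inv A hAdet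
  have hAiA : A⁻¹ * A = 1 := Matrix.nonsing_inv_mul A hAdet
  have hBBi : B * B⁻¹ = 1 := Matrix.mul_nonsing_inv B hBdet
  have hBiB : B⁻¹ * B = 1 := Matrix.nonsing_inv_mul B hBdet
  have hΔS : Δ * S = A - B := by
    rw [hA, hB]
    simp only [Matrix.add_mul]
    abel
  clear_value A B
  clear hA hB
  set N : Matrix (Fin p) (Fin p) ℂ := 1 + S * B⁻¹ * Δ with hN
  have h1 : (1 - S * A⁻¹ * Δ) * N = 1 := by
    have key : S * (A⁻¹ * (Δ * (S * (B⁻¹ * Δ)))) = S * (A⁻¹ * ((A - B) * (B⁻¹ * Δ))) := by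
      rw [← hΔS]
      simp only [Matrix.mul_assoc]
    rw [hN]
    simp only [Matrix.mul_add, Matrix.add_mul, Matrix.mul_sub, Matrix.sub_mul,
      Matrix.mul_one, Matrix.one_mul, Matrix.mul_assoc] at key ⊢
    rw [key]
    rw [show A⁻¹ * (A * (B⁻¹ * Δ)) = A⁻¹ * A * (B⁻¹ * Δ) from (Matrix.mul_assoc _ _ _).symm,
      hAiA,
      show B * (B⁻¹ * Δ) = B * B⁻¹ * Δ from (Matrix.mul_assoc _ _ _).symm, hBBi]
    simp only [Matrix.one_mul]
    abel
  have h2 : N * (1 - S * A⁻¹ * Δ) = 1 := by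
    have key : S * (B⁻¹ * (Δ * (S * (A⁻¹ * Δ)))) = S * (B⁻¹ * ((A - B) * (A⁻¹ * Δ))) := by
      rw [← hΔS]
      simp only [Matrix.mul_assoc]
    rw [hN]
    simp only [Matrix.mul_add, Matrix.add_mul, Matrix.mul_sub, Matrix.sub_mul,
      Matrix.mul_one, Matrix.one_mul, Matrix.mul_assoc] at key ⊢
    rw [key]
    rw [show B⁻¹ * (A * (A⁻¹ * Δ)) = B⁻¹ * (A * A⁻¹ * Δ) by rw [Matrix.mul_assoc],
      hAAi,
      show B⁻¹ * (B * (A⁻¹ * Δ)) = B⁻¹ * B * (A⁻¹ * Δ) from (Matrix.mul_assoc _ _ _).symm,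
      hBiB]
    simp only [Matrix.one_mul]
    abel
  have hUnit : IsUnit (1 - S * A⁻¹ * Δ) := ⟨⟨_, N, h1, h2⟩, rfl⟩
  have hInvN : (1 - S * A⁻¹ * Δ)⁻¹ = N := Matrix.inv_eq_right_inv h1
  have hmain : S * B⁻¹
      = S * A⁻¹ + S * A⁻¹ * Δ * (1 - S * A⁻¹ * Δ)⁻¹ * (S * A⁻¹) := by
    rw [hInvN, hN]
    have key1 : S * (A⁻¹ * (Δ * (S * A⁻¹))) = S * (A⁻¹ * ((A - B) * A⁻¹)) := by
      rw [← hΔS]; simp only [Matrix.mul_assoc]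
    have key2 : S * (A⁻¹ * (Δ * (S * (B⁻¹ * (Δ * (S * A⁻¹))))))
        = S * (A⁻¹ * ((A - B) * (B⁻¹ * ((A - B) * A⁻¹)))) := by
      rw [← hΔS]; simp only [Matrix.mul_assoc]
    simp only [Matrix.mul_add, Matrix.add_mul, Matrix.mul_sub, Matrix.sub_mul,
      Matrix.mul_one, Matrix.one_mul, Matrix.mul_assoc] at key1 key2 ⊢
    rw [key1, key2]
    rw [show A⁻¹ * (A * A⁻¹) = A⁻¹ * A * A⁻¹ from (Matrix.mul_assoc _ _ _).symm, hAiA,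
      show A⁻¹ * (A * (B⁻¹ * (A * A⁻¹))) = A⁻¹ * A * (B⁻¹ * (A * A⁻¹))
        from (Matrix.mul_assoc _ _ _).symm, hAiA,
      show A⁻¹ * (A * (B⁻¹ * (B * A⁻¹))) = A⁻¹ * A * (B⁻¹ * (B * A⁻¹))
        from (Matrix.mul_assoc _ _ _).symm, hAiA,
      hAAi,
      show B⁻¹ * (B * A⁻¹) = B⁻¹ * B * A⁻¹ from (Matrix.mul_assoc _ _ _).symm, hBiB]
    simp only [Matrix.one_mul, Matrix.mul_one]
    rw [hBBi]
    simp only [Matrix.mul_one]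
    abel
  refine ⟨hUnit, hmain, ?_⟩
  rw [upperLFT]
  exact hmain
end

section
/- Let p, m, q_l, q_r be natural numbers, S ∈ ℂ^{2×2} Hermitian positive definite, and d_F ∈ ℝ with d_F > 0. Define D_l ∈ ℂ^{(p+m+p+q_l)×(p+m+p+q_l)} and D_r ∈ ℂ^{(m+p+m+q_r)×(m+p+m+q_r)} by the block patterns D_l = [[S₁₁·I_p, 0, S₁₂·I_p, 0],[0, d_F·I_m, 0, 0],[S₂₁·I_p, 0, S₂₂·I_p, 0],[0, 0, 0, I_{q_l}]] and D_r = [[S₁₁·I_m, 0, S₁₂·I_m, 0],[0, d_F·I_p, 0, 0],[S₂₁·I_m, 0, S₂₂·I_m, 0],[0, 0, 0, I_{q_r}]]. Then D_l and D_r are Hermitian positive definite, and for every block-diagonal Δ = diag(Δ₁, Δ₂, Δ₁, Δ₃) with Δ₁ ∈ ℂ^{m×p}, Δ₂ ∈ ℂ^{p×m}, Δ₃ ∈ ℂ^{q_r×q_l} (where the first and third diagonal blocks are the same matrix Δ₁), the unique positive-definite square roots satisfy D_r^{1/2}·Δ = Δ·D_l^{1/2}. -/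
open Matrix
open scoped ComplexOrder

/-- `Matrix.PosSemidef.sqrt` as it stood in Mathlib of December 2024 (since removed). -/
noncomputable def Matrix.PosSemidef.sqrt {n : Type*} [Fintype n] [DecidableEq n]
    {A : Matrix n n ℂ} (hA : A.PosSemidef) : Matrix n n ℂ :=
  hA.isHermitian.eigenvectorUnitary.1 * diagonal ((↑) ∘ (√·) ∘ hA.isHermitian.eigenvalues) *
    (star hA.isHermitian.eigenvectorUnitary : Matrix n n ℂ)

/-!
The block pattern of the scaling matrices is multiplicative,
`scalingMatrix T d * scalingMatrix T' d' = scalingMatrix (T * T') (d * d')`, and compatible with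
`ᴴ`. Writing `S = Rᴴ R`, the matrix `scalingMatrix S d = (scalingMatrix R √d)ᴴ (scalingMatrix R √d)`
is positive semidefinite, and invertible with inverse `scalingMatrix S⁻¹ d⁻¹`, hence positive
definite; by uniqueness of positive square roots its square root is `scalingMatrix S^{1/2} √d`.
Every matrix of the pattern intertwines the structured `Δ`, because `Δ` repeats `Δ₁` in exactly
the two block positions that the `2 × 2` factor couples.
-/

open scoped MatrixOrder

lemma Matrix.PosSemidef.sqrt_eq_cfcSqrt {n : Type*} [Fintype n] [DecidableEq n]
    {A : Matrix n n ℂ} (hA : A.PosSemidef) : hA.sqrt = CFC.sqrt A := by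
  rw [CFC.sqrt_eq_real_sqrt A hA.nonneg, cfcₙ_eq_cfc, hA.isHermitian.cfc_eq]
  rfl

section ScalingMatrix

variable {ι κ ν ι' κ' ν' : Type*} [DecidableEq ι] [DecidableEq κ] [DecidableEq ν]

def scalingMatrix (T : Matrix (Fin 2) (Fin 2) ℂ) (d : ℝ) :
    Matrix ((ι ⊕ κ) ⊕ (ι ⊕ ν)) ((ι ⊕ κ) ⊕ (ι ⊕ ν)) ℂ :=
  fromBlocks (fromBlocks (T 0 0 • 1) 0 0 ((d : ℂ) • 1)) (fromBlocks (T 0 1 • 1) 0 0 0)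
    (fromBlocks (T 1 0 • 1) 0 0 0) (fromBlocks (T 1 1 • 1) 0 0 1)

lemma scalingMatrix_one : scalingMatrix (ι := ι) (κ := κ) (ν := ν) 1 1 = 1 := by
  simp [scalingMatrix, fromBlocks_one]

lemma conjTranspose_scalingMatrix (T : Matrix (Fin 2) (Fin 2) ℂ) (d : ℝ) :
    (scalingMatrix (ι := ι) (κ := κ) (ν := ν) T d)ᴴ = scalingMatrix Tᴴ d := by
  simp [scalingMatrix, fromBlocks_conjTranspose, conjTranspose_smul]

variable [Fintype ι] [Fintype κ] [Fintype ν]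

lemma scalingMatrix_mul (T T' : Matrix (Fin 2) (Fin 2) ℂ) (d d' : ℝ) :
    scalingMatrix (ι := ι) (κ := κ) (ν := ν) T d * scalingMatrix T' d' =
      scalingMatrix (T * T') (d * d') := by
  simp only [scalingMatrix, fromBlocks_multiply, Matrix.smul_mul, Matrix.mul_smul, smul_smul,
    Matrix.one_mul, Matrix.mul_zero, Matrix.zero_mul, add_zero, zero_add, fromBlocks_add, ← add_smul,
    Matrix.mul_apply, Fin.sum_univ_two, Complex.ofReal_mul, smul_zero, mul_comm]

lemma scalingMatrix_posSemidef {T : Matrix (Fin 2) (Fin 2) ℂ} (hT : T.PosSemidef) {d : ℝ}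
    (hd : 0 ≤ d) : (scalingMatrix (ι := ι) (κ := κ) (ν := ν) T d).PosSemidef := by
  obtain ⟨R, rfl⟩ := CStarAlgebra.nonneg_iff_eq_star_mul_self.mp hT.nonneg
  have hgram : scalingMatrix (ι := ι) (κ := κ) (ν := ν) (star R * R) d =
      (scalingMatrix R √d)ᴴ * scalingMatrix R √d := by
    rw [conjTranspose_scalingMatrix, scalingMatrix_mul, Real.mul_self_sqrt hd,
      star_eq_conjTranspose]
  rw [hgram]
  exact posSemidef_conjTranspose_mul_self _

lemma scalingMatrix_posDef {T : Matrix (Fin 2) (Fin 2) ℂ} (hT : T.PosDef) {d : ℝ}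
    (hd : 0 < d) : (scalingMatrix (ι := ι) (κ := κ) (ν := ν) T d).PosDef := by
  refine (scalingMatrix_posSemidef hT.posSemidef hd.le).posDef_iff_isUnit.mpr
    (IsUnit.of_mul_eq_one (scalingMatrix T⁻¹ d⁻¹) ?_)
  rw [scalingMatrix_mul, mul_nonsing_inv T (isUnit_iff_isUnit_det T |>.mp hT.isUnit),
    mul_inv_cancel₀ hd.ne', scalingMatrix_one]

lemma cfcSqrt_scalingMatrix {T : Matrix (Fin 2) (Fin 2) ℂ} (hT : T.PosSemidef) {d : ℝ}
    (hd : 0 ≤ d) :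
    CFC.sqrt (scalingMatrix (ι := ι) (κ := κ) (ν := ν) T d) = scalingMatrix (CFC.sqrt T) √d :=
  CFC.sqrt_unique
    (by rw [scalingMatrix_mul, CFC.sqrt_mul_sqrt_self T hT.nonneg, Real.mul_self_sqrt hd])
    (scalingMatrix_posSemidef (CFC.sqrt_nonneg T).posSemidef (Real.sqrt_nonneg d)).nonneg

variable [DecidableEq ι'] [DecidableEq κ'] [DecidableEq ν'] [Fintype ι'] [Fintype κ'] [Fintype ν']

lemma scalingMatrix_mul_fromBlocks_comm (T : Matrix (Fin 2) (Fin 2) ℂ) (d : ℝ)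
    (Δ₁ : Matrix ι' ι ℂ) (Δ₂ : Matrix κ' κ ℂ) (Δ₃ : Matrix ν' ν ℂ) :
    scalingMatrix (ι := ι') (κ := κ') (ν := ν') T d *
        fromBlocks (fromBlocks Δ₁ 0 0 Δ₂) 0 0 (fromBlocks Δ₁ 0 0 Δ₃) =
      fromBlocks (fromBlocks Δ₁ 0 0 Δ₂) 0 0 (fromBlocks Δ₁ 0 0 Δ₃) *
        scalingMatrix (ι := ι) (κ := κ) (ν := ν) T d := by
  simp only [scalingMatrix, fromBlocks_multiply, Matrix.smul_mul, Matrix.mul_smul, Matrix.one_mul,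
    Matrix.mul_one, Matrix.zero_mul, Matrix.mul_zero, add_zero, zero_add, smul_zero]

end ScalingMatrix

/-- The paper's admissible scaling matrices: for `S ∈ ℂ^{2×2}` Hermitian positive definite and
`d_F > 0`, the structured matrices
`D_l = [[S₁₁·I_p, 0, S₁₂·I_p, 0],[0, d_F·I_m, 0, 0],[S₂₁·I_p, 0, S₂₂·I_p, 0],[0, 0, 0, I_{q_l}]]`
and
`D_r = [[S₁₁·I_m, 0, S₁₂·I_m, 0],[0, d_F·I_p, 0, 0],[S₂₁·I_m, 0, S₂₂·I_m, 0],[0, 0, 0, I_{q_r}]]`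
are Hermitian positive definite, and their unique positive-definite square roots satisfy the
commutation property `D_r^{1/2}·Δ = Δ·D_l^{1/2}` for every structured
`Δ = diag(Δ₁, Δ₂, Δ₁, Δ₃)`. -/
theorem scaling_matrices_posDef_and_sqrt_comm
    (p m ql qr : ℕ) (S : Matrix (Fin 2) (Fin 2) ℂ)
    (hS : S.PosDef) (dF : ℝ) (hdF : 0 < dF)
    (Dl : Matrix ((Fin p ⊕ Fin m) ⊕ (Fin p ⊕ Fin ql))
          ((Fin p ⊕ Fin m) ⊕ (Fin p ⊕ Fin ql)) ℂ)
    (hDl : Dl = fromBlocks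
        (fromBlocks (S 0 0 • 1) 0 0 ((dF : ℂ) • 1))
        (fromBlocks (S 0 1 • 1) 0 0 0)
        (fromBlocks (S 1 0 • 1) 0 0 0)
        (fromBlocks (S 1 1 • 1) 0 0 1))
    (Dr : Matrix ((Fin m ⊕ Fin p) ⊕ (Fin m ⊕ Fin qr))
          ((Fin m ⊕ Fin p) ⊕ (Fin m ⊕ Fin qr)) ℂ)
    (hDr : Dr = fromBlocks
        (fromBlocks (S 0 0 • 1) 0 0 ((dF : ℂ) • 1))
        (fromBlocks (S 0 1 • 1) 0 0 0)
        (fromBlocks (S 1 0 • 1) 0 0 0)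
        (fromBlocks (S 1 1 • 1) 0 0 1)) :
    Dl.PosDef ∧ Dr.PosDef ∧
      ∀ (hDl' : Dl.PosDef) (hDr' : Dr.PosDef)
        (Δ₁ : Matrix (Fin m) (Fin p) ℂ) (Δ₂ : Matrix (Fin p) (Fin m) ℂ)
        (Δ₃ : Matrix (Fin qr) (Fin ql) ℂ),
        hDr'.posSemidef.sqrt * fromBlocks (fromBlocks Δ₁ 0 0 Δ₂) 0 0 (fromBlocks Δ₁ 0 0 Δ₃) =
          fromBlocks (fromBlocks Δ₁ 0 0 Δ₂) 0 0 (fromBlocks Δ₁ 0 0 Δ₃) *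
            hDl'.posSemidef.sqrt := by
  obtain rfl : Dl = scalingMatrix S dF := hDl
  obtain rfl : Dr = scalingMatrix S dF := hDr
  refine ⟨scalingMatrix_posDef hS hdF, scalingMatrix_posDef hS hdF, fun hDl hDr Δ₁ Δ₂ Δ₃ => ?_⟩
  rw [hDl.posSemidef.sqrt_eq_cfcSqrt, hDr.posSemidef.sqrt_eq_cfcSqrt,
    cfcSqrt_scalingMatrix hS.posSemidef hdF.le, cfcSqrt_scalingMatrix hS.posSemidef hdF.le]
  exact scalingMatrix_mul_fromBlocks_comm _ _ Δ₁ Δ₂ Δ₃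
end

section
/- Let N ∈ ℂ^{n×k}, let D_l ∈ ℂ^{n×n} and D_r ∈ ℂ^{k×k} be Hermitian positive definite with D_l − N·D_r·N^H positive definite, and let Δ ∈ ℂ^{k×n} satisfy ‖Δ‖ ≤ 1 and D_r^{1/2}·Δ = Δ·D_l^{1/2} (where D_l^{1/2}, D_r^{1/2} are the unique positive-definite square roots). Then I_n − N·Δ is invertible (and likewise I_k − Δ·N is invertible). -/
open Matrix
open scoped ComplexOrder Matrix.Norms.L2Operator MatrixOrder

/-!
With `T = D_l^{1/2}`, `R = D_r^{1/2}` and the scaled gain `M = T⁻¹ N R`, the performance condition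
is the congruence `1 - M Mᴴ = T⁻¹ (D_l - N D_r Nᴴ) T⁻¹ > 0`. In the C⋆-algebra of square matrices
the norm of `M Mᴴ ≥ 0` lies in its spectrum, which avoids `1`, so `‖M‖² = ‖M Mᴴ‖ < 1`. The
commutation hypothesis makes `M Δ = T⁻¹ (N Δ) T`, hence `1 - N Δ` is similar to `1 - M Δ`, which
is invertible by the Neumann series since `‖M Δ‖ < 1`. The Weinstein–Aronszajn identity
`det (1 - N Δ) = det (1 - Δ N)` transfers invertibility to `1 - Δ N`.
-/

lemma CStarAlgebra.norm_lt_one_of_isUnit_one_sub {A : Type*} [CStarAlgebra A] [PartialOrder A]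
    [StarOrderedRing A] {a : A} (ha : 0 ≤ a) (ha_le : a ≤ 1) (hunit : IsUnit (1 - a)) :
    ‖a‖ < 1 := by
  obtain h | _ := subsingleton_or_nontrivial A
  · simp [Subsingleton.elim a 0]
  refine ((norm_le_one_iff_of_nonneg a).mpr ha_le).lt_of_ne fun hnorm => ?_
  have hspec := norm_mem_spectrum_of_nonneg ha
  rw [hnorm, spectrum.mem_iff, map_one] at hspec
  exact hspec hunit

namespace Matrix

variable {m n : Type*} [Fintype m] [Fintype n] [DecidableEq n]

lemma l2_opNorm_lt_one_of_posDef_one_sub_mul_conjTranspose [DecidableEq m] {M : Matrix m n ℂ}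
    (hM : (1 - M * Mᴴ).PosDef) : ‖M‖ < 1 := by
  have hMM : ‖M * Mᴴ‖ < 1 :=
    CStarAlgebra.norm_lt_one_of_isUnit_one_sub (posSemidef_self_mul_conjTranspose M).nonneg
      (sub_nonneg.mp hM.posSemidef.nonneg) hM.isUnit
  have hcstar := l2_opNorm_conjTranspose_mul_self Mᴴ
  rw [conjTranspose_conjTranspose, l2_opNorm_conjTranspose] at hcstar
  nlinarith [norm_nonneg M]

lemma isUnit_one_sub_mul_of_posDef_one_sub_mul_conjTranspose [DecidableEq m] {M : Matrix m n ℂ}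
    {Δ : Matrix n m ℂ} (hM : (1 - M * Mᴴ).PosDef) (hΔ : ‖Δ‖ ≤ 1) : IsUnit (1 - M * Δ) := by
  refine isUnit_one_sub_of_norm_lt_one ?_
  calc ‖M * Δ‖ ≤ ‖M‖ * ‖Δ‖ := l2_opNorm_mul M Δ
    _ ≤ ‖M‖ := mul_le_of_le_one_right (norm_nonneg M) hΔ
    _ < 1 := l2_opNorm_lt_one_of_posDef_one_sub_mul_conjTranspose hM

lemma isUnit_one_sub_mul_comm [DecidableEq m] {α : Type*} [CommRing α] (A : Matrix m n α)
    (B : Matrix n m α) : IsUnit (1 - A * B) ↔ IsUnit (1 - B * A) := by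
  rw [isUnit_iff_isUnit_det, isUnit_iff_isUnit_det, det_one_sub_mul_comm]

variable {α : Type*} [CommRing α] {T : Matrix n n α} {R : Matrix m m α}

lemma one_sub_scaled_mul_conjTranspose [StarRing α] (hT : IsUnit T) (hT_herm : Tᴴ = T)
    (hR_herm : Rᴴ = R) (N : Matrix n m α) :
    1 - (T⁻¹ * N * R) * (T⁻¹ * N * R)ᴴ = (T⁻¹)ᴴ * (T * T - N * (R * R) * Nᴴ) * T⁻¹ := by
  have hTdet := (isUnit_iff_isUnit_det T).mp hT
  simp only [conjTranspose_mul, conjTranspose_nonsing_inv, hT_herm, hR_herm, Matrix.mul_sub,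
    Matrix.sub_mul, Matrix.mul_assoc, mul_nonsing_inv _ hTdet, nonsing_inv_mul _ hTdet,
    Matrix.mul_one]

lemma one_sub_mul_eq_conj_one_sub_scaled_mul (hT : IsUnit T) (N : Matrix n m α)
    {Δ : Matrix m n α} (hcomm : R * Δ = Δ * T) :
    1 - N * Δ = T * (1 - (T⁻¹ * N * R) * Δ) * T⁻¹ := by
  have hTdet := (isUnit_iff_isUnit_det T).mp hT
  rw [Matrix.mul_assoc _ R, hcomm]
  simp only [Matrix.mul_sub, Matrix.sub_mul, Matrix.mul_assoc, Matrix.mul_one,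
    mul_nonsing_inv _ hTdet, mul_nonsing_inv_cancel_left _ _ hTdet]

end Matrix

/-- D-scaled small-gain theorem: if `D_l`, `D_r` are Hermitian positive definite with
`D_l − N·D_r·N^H` positive definite, and `Δ` satisfies `‖Δ‖ ≤ 1` (spectral norm) together with
the scaling-commutation property `D_r^{1/2}·Δ = Δ·D_l^{1/2}`, then `I − N·Δ` and `I − Δ·N`
are invertible. -/
theorem scaled_small_gain
    (n k : ℕ) (N : Matrix (Fin n) (Fin k) ℂ)
    (Dl : Matrix (Fin n) (Fin n) ℂ) (Dr : Matrix (Fin k) (Fin k) ℂ)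
    (hDl : Dl.PosDef) (hDr : Dr.PosDef)
    (hperf : (Dl - N * Dr * Nᴴ).PosDef)
    (Δ : Matrix (Fin k) (Fin n) ℂ)
    (hΔ : ‖Δ‖ ≤ 1)
    (hcomm : CFC.sqrt Dr * Δ = Δ * CFC.sqrt Dl) :
    IsUnit (1 - N * Δ) ∧ IsUnit (1 - Δ * N) := by
  set T := CFC.sqrt Dl
  set R := CFC.sqrt Dr
  have hT : IsUnit T := hDl.isStrictlyPositive.isUnit_cfcSqrt
  have hT_inv : IsUnit T⁻¹ := isUnit_nonsing_inv_iff.mpr hT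
  have hTT : T * T = Dl := CFC.sqrt_mul_sqrt_self Dl hDl.posSemidef.nonneg
  have hRR : R * R = Dr := CFC.sqrt_mul_sqrt_self Dr hDr.posSemidef.nonneg
  have hscaled : (1 - (T⁻¹ * N * R) * (T⁻¹ * N * R)ᴴ).PosDef := by
    rw [one_sub_scaled_mul_conjTranspose hT (CFC.sqrt_nonneg Dl).isSelfAdjoint
      (CFC.sqrt_nonneg Dr).isSelfAdjoint, hTT, hRR]
    exact (IsUnit.posDef_star_left_conjugate_iff hT_inv).mpr hperf
  have hNΔ : IsUnit (1 - N * Δ) := by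
    rw [one_sub_mul_eq_conj_one_sub_scaled_mul hT N hcomm]
    exact (hT.mul (isUnit_one_sub_mul_of_posDef_one_sub_mul_conjTranspose hscaled hΔ)).mul hT_inv
  exact ⟨hNΔ, (isUnit_one_sub_mul_comm N Δ).mp hNΔ⟩
end

section
/- Let p, m, p_C, m_C be natural numbers, E11 ∈ ℂ^{p_C×m_C}, E12 ∈ ℂ^{p_C×p}, E21 ∈ ℂ^{m×m_C}, E22 ∈ ℂ^{m×p}, Σ ∈ ℂ^{p×m} with I − E22·Σ invertible, and set M = Σ·(I − E22·Σ)⁻¹, N̄11 = [[M, I, M],[I, 0, 0],[M, 0, M]], N̄12 = [M·E21; E21; M·E21], N̄21 = [E12·M, E12, E12·M], and N the 4×4-block matrix [[M, I, M, M·E21],[I, 0, 0, E21],[M, 0, M, M·E21],[E12·M, E12, E12·M, 0]]. Let V_E ∈ ℂ^{p×p}, W_E ∈ ℂ^{m×m}, V_F ∈ ℂ^{m×m}, W_F ∈ ℂ^{p×p}, V_Cw ∈ ℂ^{p_C×p_C}, W_Cw ∈ ℂ^{m_C×m_C} be invertible, and set V = diag(V_E, V_F, V_E, V_Cw) and W =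 diag(W_E, W_F, W_E, W_Cw). Suppose there exist a Hermitian positive definite S ∈ ℂ^{2×2} and d_F > 0 such that, with D_l = [[S₁₁·I_p, 0, S₁₂·I_p, 0],[0, d_F·I_m, 0, 0],[S₂₁·I_p, 0, S₂₂·I_p, 0],[0, 0, 0, I_{p_C}]] and D_r = [[S₁₁·I_m, 0, S₁₂·I_m, 0],[0, d_F·I_p, 0, 0],[S₂₁·I_m, 0, S₂₂·I_m, 0],[0, 0, 0, I_{m_C}]], the matrix D_l − (V·N·W)·D_r·(V·N·W)^H is positive definite. Then for all E_E ∈ ℂ^{m×p} and E_F ∈ ℂ^{p×m} with ‖W_E⁻¹·E_E·V_E⁻¹‖ ≤ 1 and ‖W_F⁻¹·E_F·V_F⁻¹‖ ≤ 1, the matrix I − N̄11·diag(E_E, E_F, E_E) is invertible. -/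
/-!
If `1 - N̄₁₁ Δ` were singular, a nonzero `u` with `(1 - N̄₁₁ Δ)ᴴ u = 0` would give, after the
scalings `V̄ = diag(V_E, V_F, V_E)` and `W̄ = diag(W_E, W_F, W_E)`, a fixed point of `Δ̃ᴴ 𝒩ᴴ`,
where `𝒩 = V̄ N̄₁₁ W̄` and `Δ̃ = W̄⁻¹ Δ V̄⁻¹` is a block-diagonal contraction. The upper-left
block of the scaled inequality gives `uᴴ 𝒩 D_r 𝒩ᴴ u < uᴴ D_l u`. Since the scalings commute
with the repeated structure of `Δ̃`, contractivity gives `Δ̃ D_l Δ̃ᴴ ≤ D_r`, and evaluating this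
at `𝒩ᴴ u` yields the reverse inequality.
-/

open Matrix
open scoped ComplexOrder Matrix.Norms.L2Operator

namespace Matrix

variable {𝕜 : Type*} [RCLike 𝕜] {m n : Type*} [Fintype m] [Fintype n]

theorem star_mulVec_dotProduct (A : Matrix m n 𝕜) (x : n → 𝕜) (y : m → 𝕜) :
    star (A *ᵥ x) ⬝ᵥ y = star x ⬝ᵥ (Aᴴ *ᵥ y) := by
  rw [star_mulVec, dotProduct_mulVec]

theorem star_dotProduct_self_eq_norm_sq (x : n → 𝕜) :
    star x ⬝ᵥ x = ((‖WithLp.toLp 2 x‖ ^ 2 : ℝ) : 𝕜) := by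
  rw [RCLike.ofReal_pow, ← inner_self_eq_norm_sq_to_K, EuclideanSpace.inner_toLp_toLp,
    dotProduct_comm]

theorem star_mulVec_dotProduct_mulVec_le [DecidableEq n] {A : Matrix m n 𝕜} (hA : ‖A‖ ≤ 1)
    (x : n → 𝕜) : star (A *ᵥ x) ⬝ᵥ (A *ᵥ x) ≤ star x ⬝ᵥ x := by
  have hle : ‖WithLp.toLp 2 (A *ᵥ x)‖ ≤ ‖WithLp.toLp 2 x‖ :=
    (A.l2_opNorm_mulVec (WithLp.toLp 2 x)).trans (mul_le_of_le_one_left (norm_nonneg _) hA)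
  rw [star_dotProduct_self_eq_norm_sq, star_dotProduct_self_eq_norm_sq, RCLike.ofReal_le_ofReal]
  gcongr

theorem posSemidef_one_sub_mul_conjTranspose [DecidableEq m] [DecidableEq n] {A : Matrix m n 𝕜}
    (hA : ‖A‖ ≤ 1) : (1 - A * Aᴴ).PosSemidef := by
  refine .of_dotProduct_mulVec_nonneg (by simp [IsHermitian, conjTranspose_sub]) fun z => ?_
  have hz := star_mulVec_dotProduct_mulVec_le (A := Aᴴ) (by rwa [l2_opNorm_conjTranspose]) z
  rw [star_mulVec_dotProduct, conjTranspose_conjTranspose, mulVec_mulVec] at hz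
  rwa [sub_mulVec, one_mulVec, dotProduct_sub, sub_nonneg]

open scoped MatrixOrder in
theorem exists_dotProduct_sub_conjTranspose_mulVec_eq [DecidableEq m] [DecidableEq n]
    {A : Matrix m n 𝕜} (hA : ‖A‖ ≤ 1) :
    ∃ B : Matrix m m 𝕜, ∀ u v : m → 𝕜,
      star u ⬝ᵥ v - star (Aᴴ *ᵥ u) ⬝ᵥ (Aᴴ *ᵥ v) = star (B *ᵥ u) ⬝ᵥ (B *ᵥ v) := by
  obtain ⟨B, hB⟩ := CStarAlgebra.nonneg_iff_eq_star_mul_self.mp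
    (posSemidef_one_sub_mul_conjTranspose hA).nonneg
  refine ⟨B, fun u v => ?_⟩
  rw [star_mulVec_dotProduct, star_mulVec_dotProduct, conjTranspose_conjTranspose, mulVec_mulVec,
    mulVec_mulVec, ← star_eq_conjTranspose, ← hB, sub_mulVec, one_mulVec, dotProduct_sub]

/-- The quadratic form of `S ⊗ 1` at the stacked vector `(u, v)`. -/
def pairForm (S : Matrix (Fin 2) (Fin 2) 𝕜) (u v : n → 𝕜) : 𝕜 :=
  S 0 0 * (star u ⬝ᵥ u) + S 0 1 * (star u ⬝ᵥ v) + S 1 0 * (star v ⬝ᵥ u) + S 1 1 * (star v ⬝ᵥ v)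

theorem pairForm_nonneg {S : Matrix (Fin 2) (Fin 2) 𝕜} (hS : S.PosSemidef) (u v : n → 𝕜) :
    0 ≤ pairForm S u v := by
  have hsum : pairForm S u v = ∑ i, star ![u i, v i] ⬝ᵥ (S *ᵥ ![u i, v i]) := by
    simp only [pairForm, dotProduct, mulVec, Finset.mul_sum, ← Finset.sum_add_distrib]
    refine Finset.sum_congr rfl fun i _ => ?_
    simp only [Fin.isValue, Pi.star_apply, RCLike.star_def, Fin.sum_univ_two, cons_val_zero,
      cons_val_one, cons_val_fin_one]
    ring
  rw [hsum]
  exact Finset.sum_nonneg fun i _ => hS.dotProduct_mulVec_nonneg _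

theorem pairForm_conjTranspose_mulVec_le [DecidableEq m] [DecidableEq n]
    {S : Matrix (Fin 2) (Fin 2) 𝕜} (hS : S.PosSemidef) {A : Matrix m n 𝕜} (hA : ‖A‖ ≤ 1)
    (u v : m → 𝕜) : pairForm S (Aᴴ *ᵥ u) (Aᴴ *ᵥ v) ≤ pairForm S u v := by
  obtain ⟨B, hB⟩ := exists_dotProduct_sub_conjTranspose_mulVec_eq hA
  have hdiff : pairForm S u v - pairForm S (Aᴴ *ᵥ u) (Aᴴ *ᵥ v) = pairForm S (B *ᵥ u) (B *ᵥ v) := by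
    simp only [pairForm, ← hB]
    ring
  exact sub_nonneg.mp (hdiff ▸ pairForm_nonneg hS _ _)

variable (m n) in
/-- `S ⊗ 1` on the two copies of `m` and `d • 1` on `n`: the paper's `D_l` is
`structuredScaling (Fin p) (Fin m) S d_F` and its `D_r` is
`structuredScaling (Fin m) (Fin p) S d_F`. -/
def structuredScaling [DecidableEq m] [DecidableEq n] (S : Matrix (Fin 2) (Fin 2) 𝕜) (d : 𝕜) :
    Matrix (m ⊕ (n ⊕ m)) (m ⊕ (n ⊕ m)) 𝕜 :=
  fromBlocks (S 0 0 • 1) (fromCols 0 (S 0 1 • 1)) (fromRows 0 (S 1 0 • 1))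
    (fromBlocks (d • 1) 0 0 (S 1 1 • 1))

theorem star_dotProduct_structuredScaling_mulVec [DecidableEq m] [DecidableEq n]
    (S : Matrix (Fin 2) (Fin 2) 𝕜) (d : 𝕜) (u : m → 𝕜) (w : n → 𝕜) (v : m → 𝕜) :
    star (Sum.elim u (Sum.elim w v)) ⬝ᵥ (structuredScaling m n S d *ᵥ Sum.elim u (Sum.elim w v)) =
      pairForm S u v + d * (star w ⬝ᵥ w) := by
  simp only [Function.star_sumElim, structuredScaling, fromBlocks_mulVec, Sum.elim_comp_inl,
    smul_mulVec, one_mulVec, Sum.elim_comp_inr, fromCols_mulVec, zero_mulVec, zero_add,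
    fromRows_mulVec, add_zero, sumElim_dotProduct_sumElim, dotProduct_add, dotProduct_smul,
    smul_eq_mul, dotProduct_zero, pairForm]
  ring

theorem star_dotProduct_structuredScaling_le [DecidableEq m] [DecidableEq n]
    {S : Matrix (Fin 2) (Fin 2) 𝕜} (hS : S.PosSemidef) {d : 𝕜} (hd : 0 ≤ d)
    {A : Matrix m n 𝕜} {B : Matrix n m 𝕜} (hA : ‖A‖ ≤ 1) (hB : ‖B‖ ≤ 1)
    (x : m ⊕ (n ⊕ m) → 𝕜) :
    star ((fromBlocks A 0 0 (fromBlocks B 0 0 A))ᴴ *ᵥ x) ⬝ᵥ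
        (structuredScaling n m S d *ᵥ ((fromBlocks A 0 0 (fromBlocks B 0 0 A))ᴴ *ᵥ x)) ≤
      star x ⬝ᵥ (structuredScaling m n S d *ᵥ x) := by
  obtain ⟨u, y, rfl⟩ : ∃ u y, x = Sum.elim u y := ⟨_, _, (Sum.elim_comp_inl_inr x).symm⟩
  obtain ⟨w, v, rfl⟩ : ∃ w v, y = Sum.elim w v := ⟨_, _, (Sum.elim_comp_inl_inr y).symm⟩
  simp only [fromBlocks_conjTranspose, conjTranspose_zero, fromBlocks_mulVec, zero_mulVec,
    Sum.elim_comp_inl, Sum.elim_comp_inr, add_zero, zero_add,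
    star_dotProduct_structuredScaling_mulVec]
  gcongr ?_ + d * ?_
  · exact pairForm_conjTranspose_mulVec_le hS hA u v
  · exact star_mulVec_dotProduct_mulVec_le (by rwa [l2_opNorm_conjTranspose]) w

theorem isUnit_one_sub_mul_of_posDef [DecidableEq m] {L : Matrix m m 𝕜}
    {R : Matrix n n 𝕜} {N : Matrix m n 𝕜} {Δ : Matrix n m 𝕜} (hN : (L - N * R * Nᴴ).PosDef)
    (hΔ : ∀ x, star (Δᴴ *ᵥ x) ⬝ᵥ (L *ᵥ (Δᴴ *ᵥ x)) ≤ star x ⬝ᵥ (R *ᵥ x)) :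
    IsUnit (1 - N * Δ) := by
  by_contra hsing
  have hdet : (1 - N * Δ)ᴴ.det = 0 := by
    rw [det_conjTranspose, star_eq_zero]
    simpa [isUnit_iff_isUnit_det] using hsing
  obtain ⟨u, hu, hker⟩ := exists_mulVec_eq_zero_iff.mpr hdet
  have hfix : Δᴴ *ᵥ (Nᴴ *ᵥ u) = u := by
    rw [conjTranspose_sub, conjTranspose_one, conjTranspose_mul, sub_mulVec, one_mulVec,
      sub_eq_zero, ← mulVec_mulVec] at hker
    exact hker.symm
  have hpos := hN.dotProduct_mulVec_pos hu
  have hform : star u ⬝ᵥ ((N * R * Nᴴ) *ᵥ u) = star (Nᴴ *ᵥ u) ⬝ᵥ (R *ᵥ (Nᴴ *ᵥ u)) := by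
    rw [star_mulVec_dotProduct, conjTranspose_conjTranspose, mulVec_mulVec, mulVec_mulVec]
  rw [sub_mulVec, dotProduct_sub, sub_pos, hform] at hpos
  have hle := hΔ (Nᴴ *ᵥ u)
  rw [hfix] at hle
  exact (hle.trans_lt hpos).false

theorem PosDef.sub_mul_mul_conjTranspose_of_fromBlocks {m₁ m₂ n₁ n₂ : Type*} [Fintype m₁]
    [Fintype m₂] [Fintype n₁] [Fintype n₂] {L₁ : Matrix m₁ m₁ 𝕜} {L₂ : Matrix m₂ m₂ 𝕜}
    {R₁ : Matrix n₁ n₁ 𝕜} {R₂ : Matrix n₂ n₂ 𝕜} (hR₂ : R₂.PosSemidef) (A : Matrix m₁ n₁ 𝕜)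
    (B : Matrix m₁ n₂ 𝕜) (C : Matrix m₂ n₁ 𝕜) (D : Matrix m₂ n₂ 𝕜)
    (h : (fromBlocks L₁ 0 0 L₂ -
      fromBlocks A B C D * fromBlocks R₁ 0 0 R₂ * (fromBlocks A B C D)ᴴ).PosDef) :
    (L₁ - A * R₁ * Aᴴ).PosDef := by
  have h₁₁ : (fromBlocks L₁ 0 0 L₂ -
      fromBlocks A B C D * fromBlocks R₁ 0 0 R₂ * (fromBlocks A B C D)ᴴ).submatrix Sum.inl Sum.inl
      = L₁ - A * R₁ * Aᴴ - B * R₂ * Bᴴ := by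
    ext i j
    simp [fromBlocks_multiply, fromBlocks_conjTranspose, sub_sub]
  have := (h₁₁ ▸ h.submatrix Sum.inl_injective).add_posSemidef (hR₂.mul_mul_conjTranspose_same B)
  rwa [sub_add_cancel] at this

theorem isUnit_one_sub_mul_of_conj [DecidableEq m] {V : Matrix m m 𝕜} (hV : IsUnit V)
    {N : Matrix m n 𝕜} {W : Matrix n n 𝕜} {Δ Δ' : Matrix n m 𝕜} (hΔ : W * Δ' * V = Δ)
    (h : IsUnit (1 - V * N * W * Δ')) : IsUnit (1 - N * Δ) := by
  have hVdet := (isUnit_iff_isUnit_det V).mp hV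
  have hconj : 1 - V * N * W * Δ' = V * (1 - N * Δ) * V⁻¹ := by
    rw [← hΔ, Matrix.mul_sub, Matrix.sub_mul, Matrix.mul_one, mul_nonsing_inv _ hVdet]
    simp only [← Matrix.mul_assoc, mul_nonsing_inv_cancel_right _ _ hVdet]
  rw [isUnit_iff_isUnit_det, hconj, det_conj hV] at h
  exact (isUnit_iff_isUnit_det _).mpr h

theorem mul_inv_mul_inv_mul_cancel {α : Type*} [CommRing α] [DecidableEq m] [DecidableEq n]
    {W : Matrix n n α} {V : Matrix m m α} (hW : IsUnit W) (hV : IsUnit V) (E : Matrix n m α) :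
    W * (W⁻¹ * E * V⁻¹) * V = E := by
  rw [← Matrix.mul_assoc, ← Matrix.mul_assoc,
    nonsing_inv_mul_cancel_right _ _ ((isUnit_iff_isUnit_det V).mp hV),
    mul_nonsing_inv _ ((isUnit_iff_isUnit_det W).mp hW), Matrix.one_mul]

end Matrix

theorem robust_wellPosedness_general
    (p m pC mC : ℕ)
    (N11 : Matrix (Fin p ⊕ (Fin m ⊕ Fin p)) (Fin m ⊕ (Fin p ⊕ Fin m)) ℂ)
    (N12 : Matrix (Fin p ⊕ (Fin m ⊕ Fin p)) (Fin mC) ℂ)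
    (N21 : Matrix (Fin pC) (Fin m ⊕ (Fin p ⊕ Fin m)) ℂ)
    (N : Matrix ((Fin p ⊕ (Fin m ⊕ Fin p)) ⊕ Fin pC) ((Fin m ⊕ (Fin p ⊕ Fin m)) ⊕ Fin mC) ℂ)
    (hN : N = fromBlocks N11 N12 N21 0)
    (VE : Matrix (Fin p) (Fin p) ℂ) (WE : Matrix (Fin m) (Fin m) ℂ)
    (VF : Matrix (Fin m) (Fin m) ℂ) (WF : Matrix (Fin p) (Fin p) ℂ)
    (VCw : Matrix (Fin pC) (Fin pC) ℂ) (WCw : Matrix (Fin mC) (Fin mC) ℂ)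
    (hVE : IsUnit VE) (hWE : IsUnit WE) (hVF : IsUnit VF) (hWF : IsUnit WF)
    (V : Matrix ((Fin p ⊕ (Fin m ⊕ Fin p)) ⊕ Fin pC) ((Fin p ⊕ (Fin m ⊕ Fin p)) ⊕ Fin pC) ℂ)
    (hV : V = fromBlocks (fromBlocks VE 0 0 (fromBlocks VF 0 0 VE)) 0 0 VCw)
    (W : Matrix ((Fin m ⊕ (Fin p ⊕ Fin m)) ⊕ Fin mC) ((Fin m ⊕ (Fin p ⊕ Fin m)) ⊕ Fin mC) ℂ)
    (hW : W = fromBlocks (fromBlocks WE 0 0 (fromBlocks WF 0 0 WE)) 0 0 WCw)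
    (hscaling : ∃ (Ssc : Matrix (Fin 2) (Fin 2) ℂ) (dF : ℝ), Ssc.PosDef ∧ 0 < dF ∧
      ((fromBlocks
          (fromBlocks (Ssc 0 0 • 1) (fromCols 0 (Ssc 0 1 • 1))
            (fromRows 0 (Ssc 1 0 • 1)) (fromBlocks ((dF : ℂ) • 1) 0 0 (Ssc 1 1 • 1)))
          0 0 (1 : Matrix (Fin pC) (Fin pC) ℂ) :
          Matrix ((Fin p ⊕ (Fin m ⊕ Fin p)) ⊕ Fin pC) ((Fin p ⊕ (Fin m ⊕ Fin p)) ⊕ Fin pC) ℂ) -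
        (V * N * W) *
          (fromBlocks
            (fromBlocks (Ssc 0 0 • 1) (fromCols 0 (Ssc 0 1 • 1))
              (fromRows 0 (Ssc 1 0 • 1)) (fromBlocks ((dF : ℂ) • 1) 0 0 (Ssc 1 1 • 1)))
            0 0 (1 : Matrix (Fin mC) (Fin mC) ℂ) :
            Matrix ((Fin m ⊕ (Fin p ⊕ Fin m)) ⊕ Fin mC) ((Fin m ⊕ (Fin p ⊕ Fin m)) ⊕ Fin mC) ℂ) *
          (V * N * W)ᴴ).PosDef) :
    ∀ (EE : Matrix (Fin m) (Fin p) ℂ) (EF : Matrix (Fin p) (Fin m) ℂ),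
      ‖WE⁻¹ * EE * VE⁻¹‖ ≤ 1 → ‖WF⁻¹ * EF * VF⁻¹‖ ≤ 1 →
      IsUnit (1 - N11 * fromBlocks EE 0 0 (fromBlocks EF 0 0 EE)) := by
  intro EE EF hEE hEF
  obtain ⟨Ssc, dF, hSsc, hdF, hPD⟩ := hscaling
  subst hN hV hW
  set Vb := fromBlocks VE 0 0 (fromBlocks VF 0 0 VE)
  set Wb := fromBlocks WE 0 0 (fromBlocks WF 0 0 WE)
  have hVb : IsUnit Vb := by simp [Vb, hVE, hVF]
  have hscale : Wb * fromBlocks (WE⁻¹ * EE * VE⁻¹) 0 0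
      (fromBlocks (WF⁻¹ * EF * VF⁻¹) 0 0 (WE⁻¹ * EE * VE⁻¹)) * Vb =
      fromBlocks EE 0 0 (fromBlocks EF 0 0 EE) := by
    simp [Vb, Wb, fromBlocks_multiply, mul_inv_mul_inv_mul_cancel, hVE, hWE, hVF, hWF]
  have hVNW : fromBlocks Vb 0 0 VCw * fromBlocks N11 N12 N21 0 * fromBlocks Wb 0 0 WCw =
      fromBlocks (Vb * N11 * Wb) (Vb * N12 * WCw) (VCw * N21 * Wb) 0 := by
    simp [fromBlocks_multiply]
  rw [hVNW] at hPD
  have hPD₁₁ := PosDef.sub_mul_mul_conjTranspose_of_fromBlocks PosSemidef.one _ _ _ _ hPD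
  exact isUnit_one_sub_mul_of_conj hVb hscale (isUnit_one_sub_mul_of_posDef hPD₁₁
    (star_dotProduct_structuredScaling_le hSsc.posSemidef (by exact_mod_cast hdF.le) hEE hEF))

/-- Well-posedness conclusion of the frequency-pointwise robust performance corollary:
if there are structured scalings `(D_l, D_r)` (built from a Hermitian positive definite
`S ∈ ℂ^{2×2}` and `d_F > 0`) such that `D_l − (V·N·W)·D_r·(V·N·W)^H ≻ 0`, then for all
abstraction errors `E_E` with `‖W_E⁻¹·E_E·V_E⁻¹‖ ≤ 1` and reduction errors `E_F` with
`‖W_F⁻¹·E_F·V_F⁻¹‖ ≤ 1`, the matrix `I − N̄11·diag(E_E, E_F, E_E)` is invertible. -/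
theorem robust_wellPosedness
    (p m pC mC : ℕ)
    (E11 : Matrix (Fin pC) (Fin mC) ℂ) (E12 : Matrix (Fin pC) (Fin p) ℂ)
    (E21 : Matrix (Fin m) (Fin mC) ℂ) (E22 : Matrix (Fin m) (Fin p) ℂ)
    (S : Matrix (Fin p) (Fin m) ℂ) (hS : IsUnit (1 - E22 * S))
    (M : Matrix (Fin p) (Fin m) ℂ) (hM : M = S * (1 - E22 * S)⁻¹)
    (N11 : Matrix (Fin p ⊕ (Fin m ⊕ Fin p)) (Fin m ⊕ (Fin p ⊕ Fin m)) ℂ)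
    (hN11 : N11 = fromBlocks M (fromCols 1 M) (fromRows 1 M) (fromBlocks 0 0 0 M))
    (N12 : Matrix (Fin p ⊕ (Fin m ⊕ Fin p)) (Fin mC) ℂ)
    (hN12 : N12 = fromRows (M * E21) (fromRows E21 (M * E21)))
    (N21 : Matrix (Fin pC) (Fin m ⊕ (Fin p ⊕ Fin m)) ℂ)
    (hN21 : N21 = fromCols (E12 * M) (fromCols E12 (E12 * M)))
    (N : Matrix ((Fin p ⊕ (Fin m ⊕ Fin p)) ⊕ Fin pC) ((Fin m ⊕ (Fin p ⊕ Fin m)) ⊕ Fin mC) ℂ)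
    (hN : N = fromBlocks N11 N12 N21 0)
    (VE : Matrix (Fin p) (Fin p) ℂ) (WE : Matrix (Fin m) (Fin m) ℂ)
    (VF : Matrix (Fin m) (Fin m) ℂ) (WF : Matrix (Fin p) (Fin p) ℂ)
    (VCw : Matrix (Fin pC) (Fin pC) ℂ) (WCw : Matrix (Fin mC) (Fin mC) ℂ)
    (hVE : IsUnit VE) (hWE : IsUnit WE) (hVF : IsUnit VF) (hWF : IsUnit WF)
    (hVCw : IsUnit VCw) (hWCw : IsUnit WCw)
    (V : Matrix ((Fin p ⊕ (Fin m ⊕ Fin p)) ⊕ Fin pC) ((Fin p ⊕ (Fin m ⊕ Fin p)) ⊕ Fin pC) ℂ)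
    (hV : V = fromBlocks (fromBlocks VE 0 0 (fromBlocks VF 0 0 VE)) 0 0 VCw)
    (W : Matrix ((Fin m ⊕ (Fin p ⊕ Fin m)) ⊕ Fin mC) ((Fin m ⊕ (Fin p ⊕ Fin m)) ⊕ Fin mC) ℂ)
    (hW : W = fromBlocks (fromBlocks WE 0 0 (fromBlocks WF 0 0 WE)) 0 0 WCw)
    (hscaling : ∃ (Ssc : Matrix (Fin 2) (Fin 2) ℂ) (dF : ℝ), Ssc.PosDef ∧ 0 < dF ∧
      ((fromBlocks
          (fromBlocks (Ssc 0 0 • 1) (fromCols 0 (Ssc 0 1 • 1))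
            (fromRows 0 (Ssc 1 0 • 1)) (fromBlocks ((dF : ℂ) • 1) 0 0 (Ssc 1 1 • 1)))
          0 0 (1 : Matrix (Fin pC) (Fin pC) ℂ) :
          Matrix ((Fin p ⊕ (Fin m ⊕ Fin p)) ⊕ Fin pC) ((Fin p ⊕ (Fin m ⊕ Fin p)) ⊕ Fin pC) ℂ) -
        (V * N * W) *
          (fromBlocks
            (fromBlocks (Ssc 0 0 • 1) (fromCols 0 (Ssc 0 1 • 1))
              (fromRows 0 (Ssc 1 0 • 1)) (fromBlocks ((dF : ℂ) • 1) 0 0 (Ssc 1 1 • 1)))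
            0 0 (1 : Matrix (Fin mC) (Fin mC) ℂ) :
            Matrix ((Fin m ⊕ (Fin p ⊕ Fin m)) ⊕ Fin mC) ((Fin m ⊕ (Fin p ⊕ Fin m)) ⊕ Fin mC) ℂ) *
          (V * N * W)ᴴ).PosDef) :
    ∀ (EE : Matrix (Fin m) (Fin p) ℂ) (EF : Matrix (Fin p) (Fin m) ℂ),
      ‖WE⁻¹ * EE * VE⁻¹‖ ≤ 1 → ‖WF⁻¹ * EF * VF⁻¹‖ ≤ 1 →
      IsUnit (1 - N11 * fromBlocks EE 0 0 (fromBlocks EF 0 0 EE)) :=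
  robust_wellPosedness_general p m pC mC N11 N12 N21 N hN VE WE VF WF VCw WCw hVE hWE hVF hWF V hV W
    hW hscaling
end
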